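/- arXiv:1305.1206 — 3 statements merged into one kernel-verified Lean document; each statement's English description precedes it below -/
import Mathlib

section
/- Let X₁, …, X_N be real-valued random variables (not necessarily independent) on a common probability space, with cumulative distribution functions F₁, …, F_N, where Fᵢ(x) = P(Xᵢ ≤ x). Fix ε > 0 and call an index i an ε-meaningful detection if N·Fᵢ(Xᵢ) < ε. Then the expected number of ε-meaningful detections is at most ε, i.e. E[#{i ∈ {1,…,N} : N·Fᵢ(Xᵢ) < ε}] ≤ ε. -/
open MeasureTheory Set

/-!
By linearity of expectation the expected number of detections is `∑ i, P(N Fᵢ(Xᵢ) < ε)`, so it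
suffices that `P(F(X) < t) ≤ t` for the distribution function `F` of any real random variable `X`.
The levels `x` with `F x < t` form a lower set `A`, so `{F(X) < t} = ⋃ a ∈ A, {X ≤ a}` is an
increasing union of events of probability `F a < t`; since `ℝ` is second countable, continuity from
below applies to this uncountable union and bounds its probability by `t`.
-/

theorem IsLowerSet.measure_preimage_eq_iSup {Ω α : Type*} [MeasurableSpace Ω] {μ : Measure Ω}
    [LinearOrder α] [TopologicalSpace α] [OrderTopology α] [SecondCountableTopology α]
    {A : Set α} (hA : IsLowerSet A) (X : Ω → α) :
    μ (X ⁻¹' A) = ⨆ a : A, μ {ω | X ω ≤ a} := by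
  have := hA.ordConnected
  have hunion : X ⁻¹' A = ⋃ a : A, {ω | X ω ≤ a} := by
    ext ω
    simp only [mem_preimage, mem_iUnion, mem_ofPred_eq, Subtype.exists, exists_prop]
    exact ⟨fun h ↦ ⟨X ω, h, le_rfl⟩, fun ⟨a, ha, hle⟩ ↦ hA hle ha⟩
  rw [hunion]
  exact Monotone.measure_iUnion fun a b hab ω (h : X ω ≤ a) ↦ h.trans hab

theorem measure_setOf_measure_le_lt_le {Ω α : Type*} [MeasurableSpace Ω] (μ : Measure Ω)
    [LinearOrder α] [TopologicalSpace α] [OrderTopology α] [SecondCountableTopology α]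
    (X : Ω → α) (t : ENNReal) :
    μ {ω | μ {ω' | X ω' ≤ X ω} < t} ≤ t := by
  have hA : IsLowerSet {x | μ {ω | X ω ≤ x} < t} := fun a b hba (ha : _ < t) ↦
    (measure_mono fun ω (h : X ω ≤ b) ↦ h.trans hba).trans_lt ha
  rw [← preimage_ofPred_eq (p := fun x ↦ μ {ω | X ω ≤ x} < t), hA.measure_preimage_eq_iSup]
  exact iSup_le fun a ↦ a.2.le

theorem integral_card_eq_sum_measureReal {Ω ι : Type*} [MeasurableSpace Ω] (μ : Measure Ω)
    [IsFiniteMeasure μ] [Fintype ι] (P : ι → Ω → Prop) (hP : ∀ i, MeasurableSet {ω | P i ω}) :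
    ∫ ω, (Nat.card {i // P i ω} : ℝ) ∂μ = ∑ i, μ.real {ω | P i ω} := by
  classical
  have hcard (ω : Ω) : (Nat.card {i // P i ω} : ℝ) = ∑ i, {ω | P i ω}.indicator 1 ω := by
    rw [Nat.card_eq_fintype_card, Fintype.card_subtype, Finset.card_filter]
    push_cast
    simp [Set.indicator_apply]
  simp_rw [hcard]
  rw [integral_finsetSum _ fun i _ ↦ (integrable_const 1).indicator (hP i)]
  simp_rw [integral_indicator_one (hP _)]

/-- Let `X 0, …, X (N-1)` be real-valued random variables (not necessarily independent)
on a common probability space, with cumulative distribution functions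
`F i x = P(X i ≤ x)`. Fix `ε > 0` and call an index `i` an ε-meaningful detection if
`N * F i (X i) < ε`. Then the expected number of ε-meaningful detections is at most `ε`. -/
theorem expected_number_of_false_alarms_le {Ω : Type*} [MeasurableSpace Ω]
    (μ : Measure Ω) [IsProbabilityMeasure μ]
    (N : ℕ) (X : Fin N → Ω → ℝ) (hX : ∀ i, Measurable (X i))
    (F : Fin N → ℝ → ℝ) (hF : ∀ i x, F i x = (μ {ω | X i ω ≤ x}).toReal)
    (ε : ℝ) (hε : 0 < ε) :
    ∫ ω, (Nat.card {i : Fin N // (N : ℝ) * F i (X i ω) < ε} : ℝ) ∂μ ≤ ε := by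
  have hF_mono (i : Fin N) : Monotone (F i) := fun a b hab ↦ by
    simp only [hF]
    exact measureReal_mono fun ω (h : X i ω ≤ a) ↦ h.trans hab
  have h_meas (i : Fin N) : MeasurableSet {ω | (N : ℝ) * F i (X i ω) < ε} :=
    measurableSet_lt (((hF_mono i).measurable.comp (hX i)).const_mul _) measurable_const
  have h_alarm (i : Fin N) : μ.real {ω | (N : ℝ) * F i (X i ω) < ε} ≤ ε / N := by
    have hN : (0 : ℝ) < N := Nat.cast_pos.mpr i.pos
    refine ENNReal.toReal_le_of_le_ofReal (by positivity)
      (le_of_eq_of_le ?_ (measure_setOf_measure_le_lt_le μ (X i) (.ofReal (ε / N))))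
    congr with ω
    rw [hF, mul_comm, ← lt_div_iff₀ hN,
      ENNReal.lt_ofReal_iff_toReal_lt (measure_ne_top μ _)]
  calc ∫ ω, (Nat.card {i : Fin N // (N : ℝ) * F i (X i ω) < ε} : ℝ) ∂μ
      = ∑ i, μ.real {ω | (N : ℝ) * F i (X i ω) < ε} :=
        integral_card_eq_sum_measureReal μ _ h_meas
    _ ≤ ∑ _i : Fin N, ε / N := Finset.sum_le_sum fun i _ ↦ h_alarm i
    _ ≤ ε := by
        rcases N.eq_zero_or_pos with rfl | hN
        · simpa using hε.le
        · simp [mul_div_cancel₀ ε (Nat.cast_ne_zero.mpr hN.ne')]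
end

section
/- Let A be a finite set, let B, C be disjoint nonempty subsets with A = B ∪ C, and let F be a family of nonempty subsets of A such that every member of F is a subset of B or a subset of C. Let c : F → ℝ be a cost function with c(R) > 0 for all R ∈ F. Fix n ≥ 2 and suppose P* minimizes the product cost ∏_{R ∈ P} c(R) over all partitions P of A into exactly n blocks belonging to F. Let n₁ = |{R ∈ P* : R ⊆ B}| and n₂ = |{R ∈ P* : R ⊆ C}| (so n = n₁ + n₂). Then {R ∈ P* : R ⊆ B} minimizes the product cost over all partitions of B into exactly n₁ blocks belonging to F, and {R ∈ P* : R ⊆ C} minimizes the product cost over all partitions of C into exactly n₂ blocks belonging to F. -/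
/-- `P` is a partition of the finite set `X` into nonempty, pairwise disjoint blocks
whose union is `X`. -/
def IsPartitionOf {α : Type*} [DecidableEq α] (P : Finset (Finset α)) (X : Finset α) : Prop :=
  (∀ R ∈ P, R.Nonempty) ∧ (∀ R ∈ P, ∀ S ∈ P, R ≠ S → Disjoint R S) ∧ P.sup id = X

/-- `P` is a partition of `X` into exactly `k` blocks all belonging to the family `ℱ`. -/
def IsFPartition {α : Type*} [DecidableEq α] (ℱ : Set (Finset α))
    (P : Finset (Finset α)) (X : Finset α) (k : ℕ) : Prop :=
  IsPartitionOf P X ∧ (∀ R ∈ P, R ∈ ℱ) ∧ P.card = k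

section Aux
variable {α : Type*} [DecidableEq α]

lemma trace_partition (A B C : Finset α)
    (hBC : Disjoint B C) (hA : A = B ∪ C)
    (ℱ : Set (Finset α))
    (hFsub : ∀ R ∈ ℱ, R ⊆ B ∨ R ⊆ C)
    (P : Finset (Finset α)) (n : ℕ) (hP : IsFPartition ℱ P A n) :
    IsFPartition ℱ (P.filter (· ⊆ B)) B (P.filter (· ⊆ B)).card := by
  obtain ⟨⟨hne, hdisj, hsup⟩, hmem, hcard⟩ := hP
  refine ⟨⟨fun R hR => hne R (Finset.mem_filter.1 hR).1,
    fun R hR S hS hRS =>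
      hdisj R (Finset.mem_filter.1 hR).1 S (Finset.mem_filter.1 hS).1 hRS, ?_⟩,
    fun R hR => hmem R (Finset.mem_filter.1 hR).1, rfl⟩
  apply Finset.Subset.antisymm
  · intro a ha
    obtain ⟨R, hR, haR⟩ := Finset.mem_sup.1 ha
    exact (Finset.mem_filter.1 hR).2 haR
  · intro a ha
    have haA : a ∈ A := hA ▸ Finset.mem_union_left _ ha
    rw [← hsup] at haA
    obtain ⟨R, hR, haR⟩ := Finset.mem_sup.1 haA
    have hRB : R ⊆ B := by
      rcases hFsub R (hmem R hR) with h | h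
      · exact h
      · exact absurd (h haR) (Finset.disjoint_left.1 hBC ha)
    exact Finset.mem_sup.2 ⟨R, Finset.mem_filter.2 ⟨hR, hRB⟩, haR⟩

lemma trace_min (A B C : Finset α)
    (hBC : Disjoint B C) (hA : A = B ∪ C)
    (ℱ : Set (Finset α)) (hFne : ∀ R ∈ ℱ, R.Nonempty)
    (c : Finset α → ℝ) (hc : ∀ R ∈ ℱ, 0 < c R)
    (n : ℕ) (P : Finset (Finset α)) (hP : IsFPartition ℱ P A n)
    (hmin : ∀ Q, IsFPartition ℱ Q A n → ∏ R ∈ P, c R ≤ ∏ R ∈ Q, c R)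
    (hPC : IsFPartition ℱ (P.filter (· ⊆ C)) C (P.filter (· ⊆ C)).card)
    (hfilter : P.filter (· ⊆ C) = P.filter (fun R => ¬ R ⊆ B))
    (hsum : (P.filter (· ⊆ B)).card + (P.filter (· ⊆ C)).card = n) :
    ∀ Q, IsFPartition ℱ Q B (P.filter (· ⊆ B)).card →
      ∏ R ∈ P.filter (· ⊆ B), c R ≤ ∏ R ∈ Q, c R := by
  intro Q hQ
  set PC := P.filter (· ⊆ C) with hPCdef
  have hQsubB : ∀ R ∈ Q, R ⊆ B := fun R hR => hQ.1.2.2 ▸ Finset.le_sup (f := id) hR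
  have hPCsubC : ∀ R ∈ PC, R ⊆ C := fun R hR => (Finset.mem_filter.1 hR).2
  have hdisjQPC : Disjoint Q PC := by
    rw [Finset.disjoint_left]
    intro R hRQ hRPC
    obtain ⟨a, ha⟩ := hFne R (hQ.2.1 R hRQ)
    exact Finset.disjoint_left.1 hBC (hQsubB R hRQ ha) (hPCsubC R hRPC ha)
  have hQ' : IsFPartition ℱ (Q ∪ PC) A n := by
    refine ⟨⟨?_, ?_, ?_⟩, ?_, ?_⟩
    · intro R hR
      rcases Finset.mem_union.1 hR with h | h
      · exact hQ.1.1 R h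
      · exact hPC.1.1 R h
    · intro R hR S hS hRS
      rcases Finset.mem_union.1 hR with h1 | h1 <;> rcases Finset.mem_union.1 hS with h2 | h2
      · exact hQ.1.2.1 R h1 S h2 hRS
      · exact hBC.mono (hQsubB R h1) (hPCsubC S h2)
      · exact (hBC.mono (hQsubB S h2) (hPCsubC R h1)).symm
      · exact hPC.1.2.1 R h1 S h2 hRS
    · rw [Finset.sup_union, hQ.1.2.2, hPC.1.2.2, hA, Finset.sup_eq_union]
    · intro R hR
      rcases Finset.mem_union.1 hR with h | h
      · exact hQ.2.1 R h
      · exact hPC.2.1 R h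
    · rw [Finset.card_union_of_disjoint hdisjQPC, hQ.2.2, ← hsum]
  have h1 := hmin _ hQ'
  rw [Finset.prod_union hdisjQPC] at h1
  have h2 : (∏ R ∈ P.filter (· ⊆ B), c R) * ∏ R ∈ PC, c R = ∏ R ∈ P, c R := by
    rw [hfilter]
    exact Finset.prod_filter_mul_prod_filter_not P _ c
  have hpos : 0 < ∏ R ∈ PC, c R :=
    Finset.prod_pos fun R hR => hc R (hPC.2.1 R hR)
  have h3 : (∏ R ∈ P.filter (· ⊆ B), c R) * ∏ R ∈ PC, c R
      ≤ (∏ R ∈ Q, c R) * ∏ R ∈ PC, c R := by rw [h2]; exact h1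
  exact le_of_mul_le_mul_right h3 hpos

end Aux

/-- Exchange argument: if `A` is the disjoint union of nonempty sets `B` and `C`, every member
of the family `ℱ` is a nonempty subset of `B` or of `C`, the cost `c` is positive on `ℱ`, and
`P` minimizes the product cost among all partitions of `A` into exactly `n ≥ 2` blocks from `ℱ`,
then its trace on `B` (resp. `C`) minimizes the product cost among all partitions of `B`
(resp. `C`) into `n₁ = |{R ∈ P : R ⊆ B}|` (resp. `n₂ = |{R ∈ P : R ⊆ C}|`) blocks from `ℱ`. -/
theorem optimal_partition_restricts_optimally {α : Type*} [DecidableEq α] (A B C : Finset α)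
    (hB : B.Nonempty) (hC : C.Nonempty) (hBC : Disjoint B C) (hA : A = B ∪ C)
    (ℱ : Set (Finset α)) (hFne : ∀ R ∈ ℱ, R.Nonempty)
    (hFsub : ∀ R ∈ ℱ, R ⊆ B ∨ R ⊆ C)
    (c : Finset α → ℝ) (hc : ∀ R ∈ ℱ, 0 < c R)
    (n : ℕ) (hn : 2 ≤ n)
    (P : Finset (Finset α)) (hP : IsFPartition ℱ P A n)
    (hmin : ∀ Q, IsFPartition ℱ Q A n → ∏ R ∈ P, c R ≤ ∏ R ∈ Q, c R) :
    (P.filter (· ⊆ B)).card + (P.filter (· ⊆ C)).card = n ∧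
    (IsFPartition ℱ (P.filter (· ⊆ B)) B (P.filter (· ⊆ B)).card ∧
      ∀ Q, IsFPartition ℱ Q B (P.filter (· ⊆ B)).card →
        ∏ R ∈ P.filter (· ⊆ B), c R ≤ ∏ R ∈ Q, c R) ∧
    (IsFPartition ℱ (P.filter (· ⊆ C)) C (P.filter (· ⊆ C)).card ∧
      ∀ Q, IsFPartition ℱ Q C (P.filter (· ⊆ C)).card →
        ∏ R ∈ P.filter (· ⊆ C), c R ≤ ∏ R ∈ Q, c R) := by
  have hexcl : ∀ R ∈ P, ((R ⊆ C) ↔ ¬ R ⊆ B) := by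
    intro R hR
    constructor
    · intro hRC hRB
      obtain ⟨a, ha⟩ := hP.1.1 R hR
      exact Finset.disjoint_left.1 hBC (hRB ha) (hRC ha)
    · intro hnB
      rcases hFsub R (hP.2.1 R hR) with h | h
      · exact absurd h hnB
      · exact h
  have hfilter : P.filter (· ⊆ C) = P.filter (fun R => ¬ R ⊆ B) :=
    Finset.filter_congr hexcl
  have hfilter' : P.filter (· ⊆ B) = P.filter (fun R => ¬ R ⊆ C) := by
    apply Finset.filter_congr
    intro R hR
    simp [hexcl R hR]
  have hsum : (P.filter (· ⊆ B)).card + (P.filter (· ⊆ C)).card = n := by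
    rw [hfilter, Finset.card_filter_add_card_filter_not, hP.2.2]
  have hA' : A = C ∪ B := by rw [hA, Finset.union_comm]
  have hFsub' : ∀ R ∈ ℱ, R ⊆ C ∨ R ⊆ B := fun R hR => (hFsub R hR).symm
  have hPB := trace_partition A B C hBC hA ℱ hFsub P n hP
  have hPC := trace_partition A C B hBC.symm hA' ℱ hFsub' P n hP
  refine ⟨hsum, ⟨hPB, ?_⟩, ⟨hPC, ?_⟩⟩
  · exact trace_min A B C hBC hA ℱ hFne c hc n P hP hmin hPC hfilter hsum
  · exact trace_min A C B hBC.symm hA' ℱ hFne c hc n P hP hmin hPB hfilter'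
      (by rw [Nat.add_comm]; exact hsum)
end

section
/- Let A be a finite set, let B, C be disjoint nonempty subsets with A = B ∪ C, and let F be a family of nonempty subsets of A containing B and C and such that every member of F other than A is a subset of B or a subset of C. Let c : F → ℝ with c(R) > 0 for all R ∈ F. For a set X ∈ {A, B, C} and k ≥ 1, say k is admissible for X if there exists a partition of X into exactly k blocks belonging to F, and in that case let m(X, k) be the minimum of the product cost ∏_{R ∈ P} c(R) over all such partitions. Then for every k ≥ 2 admissible for A: m(A, k) = min { m(B, i) · m(C, j) : i + j = k, i admissible for B, j admissible for C }, and moreover k ≥ 2 is admissible for A if and only if there exist i admissible for B and j admissible for C with i + j = k. -/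
/-- `k` is admissible for `X`: there is a partition of `X` into exactly `k` blocks from `ℱ`. -/
def Adm {α : Type*} [DecidableEq α] (ℱ : Set (Finset α)) (X : Finset α) (k : ℕ) : Prop :=
  ∃ P : Finset (Finset α), IsFPartition ℱ P X k

section Aux

variable {α : Type*} [DecidableEq α]

lemma block_subset {P : Finset (Finset α)} {X : Finset α}
    (h : P.sup id = X) {R : Finset α} (hR : R ∈ P) : R ⊆ X := by
  have := Finset.le_sup (f := id) hR
  rw [h] at this
  exact this

lemma join_partition {ℱ : Set (Finset α)} {Q R : Finset (Finset α)} {B C : Finset α} {i j : ℕ}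
    (hBC : Disjoint B C)
    (hQ : IsFPartition ℱ Q B i) (hR : IsFPartition ℱ R C j) :
    Disjoint Q R ∧ IsFPartition ℱ (Q ∪ R) (B ∪ C) (i + j) := by
  obtain ⟨⟨hQne, hQdisj, hQsup⟩, hQF, hQcard⟩ := hQ
  obtain ⟨⟨hRne, hRdisj, hRsup⟩, hRF, hRcard⟩ := hR
  have hQB : ∀ S ∈ Q, S ⊆ B := fun S hS => block_subset hQsup hS
  have hRC : ∀ S ∈ R, S ⊆ C := fun S hS => block_subset hRsup hS
  have hdisj : Disjoint Q R := by
    rw [Finset.disjoint_left]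
    intro S hSQ hSR
    obtain ⟨x, hx⟩ := hQne S hSQ
    exact Finset.disjoint_left.mp hBC (hQB S hSQ hx) (hRC S hSR hx)
  refine ⟨hdisj, ⟨⟨?_, ?_, ?_⟩, ?_, ?_⟩⟩
  · intro S hS
    rcases Finset.mem_union.mp hS with h | h
    · exact hQne S h
    · exact hRne S h
  · intro S hS T hT hST
    rcases Finset.mem_union.mp hS with h1 | h1 <;> rcases Finset.mem_union.mp hT with h2 | h2
    · exact hQdisj S h1 T h2 hST
    · exact hBC.mono (hQB S h1) (hRC T h2)
    · exact (hBC.mono (hQB T h2) (hRC S h1)).symm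
    · exact hRdisj S h1 T h2 hST
  · rw [Finset.sup_union, hQsup, hRsup]
    rfl
  · intro S hS
    rcases Finset.mem_union.mp hS with h | h
    · exact hQF S h
    · exact hRF S h
  · rw [Finset.card_union_of_disjoint hdisj, hQcard, hRcard]

lemma split_partition {ℱ : Set (Finset α)} {P : Finset (Finset α)} {A B C : Finset α} {k : ℕ}
    (hB : B.Nonempty) (hC : C.Nonempty) (hBC : Disjoint B C) (hA : A = B ∪ C)
    (hFsub : ∀ R ∈ ℱ, R ≠ A → R ⊆ B ∨ R ⊆ C)
    (hk : 2 ≤ k) (hP : IsFPartition ℱ P A k) :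
    ∃ Pb Pc i j, IsFPartition ℱ Pb B i ∧ IsFPartition ℱ Pc C j ∧ i + j = k ∧ 1 ≤ i ∧ 1 ≤ j ∧
      Pb ∪ Pc = P ∧ Disjoint Pb Pc := by
  classical
  obtain ⟨⟨hne, hdisj, hsup⟩, hF, hcard⟩ := hP
  -- no block equals A
  have hneA : ∀ R ∈ P, R ≠ A := by
    intro R hR hRA
    have h1 : 1 < P.card := by omega
    obtain ⟨S, hS, hSR⟩ := Finset.exists_mem_ne h1 R
    obtain ⟨x, hx⟩ := hne S hS
    have hxA : x ∈ A := block_subset hsup hS hx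
    have : Disjoint R S := hdisj R hR S hS (Ne.symm hSR)
    exact Finset.disjoint_left.mp this (hRA ▸ hxA) hx
  have hsubBC : ∀ R ∈ P, R ⊆ B ∨ R ⊆ C := fun R hR => hFsub R (hF R hR) (hneA R hR)
  set Pb := P.filter (· ⊆ B) with hPb
  set Pc := P.filter (fun R => ¬ R ⊆ B) with hPc
  have hmemB : ∀ b ∈ B, ∃ R ∈ Pb, b ∈ R := by
    intro b hb
    have : b ∈ P.sup id := by rw [hsup, hA]; exact Finset.mem_union_left _ hb
    obtain ⟨R, hR, hbR⟩ := Finset.mem_sup.mp this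
    rcases hsubBC R hR with h | h
    · exact ⟨R, Finset.mem_filter.mpr ⟨hR, h⟩, hbR⟩
    · exact absurd (h hbR) (fun hc => Finset.disjoint_left.mp hBC hb hc)
  have hmemC : ∀ x ∈ C, ∃ R ∈ Pc, x ∈ R := by
    intro x hx
    have : x ∈ P.sup id := by rw [hsup, hA]; exact Finset.mem_union_right _ hx
    obtain ⟨R, hR, hxR⟩ := Finset.mem_sup.mp this
    rcases hsubBC R hR with h | h
    · exact absurd (h hxR) (fun hc => Finset.disjoint_left.mp hBC hc hx)
    · refine ⟨R, Finset.mem_filter.mpr ⟨hR, ?_⟩, hxR⟩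
      intro hRB
      exact Finset.disjoint_left.mp hBC (hRB hxR) (h hxR)
  have hPcC : ∀ R ∈ Pc, R ⊆ C := by
    intro R hR
    obtain ⟨hRP, hnB⟩ := Finset.mem_filter.mp hR
    rcases hsubBC R hRP with h | h
    · exact absurd h hnB
    · exact h
  have hPbpart : IsFPartition ℱ Pb B Pb.card := by
    refine ⟨⟨fun R hR => hne R (Finset.mem_filter.mp hR).1,
      fun R hR S hS => hdisj R (Finset.mem_filter.mp hR).1 S (Finset.mem_filter.mp hS).1, ?_⟩,
      fun R hR => hF R (Finset.mem_filter.mp hR).1, rfl⟩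
    apply Finset.Subset.antisymm
    · intro x hx
      obtain ⟨R, hR, hxR⟩ := Finset.mem_sup.mp hx
      exact (Finset.mem_filter.mp hR).2 hxR
    · intro b hb
      obtain ⟨R, hR, hbR⟩ := hmemB b hb
      exact Finset.mem_sup.mpr ⟨R, hR, hbR⟩
  have hPcpart : IsFPartition ℱ Pc C Pc.card := by
    refine ⟨⟨fun R hR => hne R (Finset.mem_filter.mp hR).1,
      fun R hR S hS => hdisj R (Finset.mem_filter.mp hR).1 S (Finset.mem_filter.mp hS).1, ?_⟩,
      fun R hR => hF R (Finset.mem_filter.mp hR).1, rfl⟩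
    apply Finset.Subset.antisymm
    · intro x hx
      obtain ⟨R, hR, hxR⟩ := Finset.mem_sup.mp hx
      exact hPcC R hR hxR
    · intro x hx
      obtain ⟨R, hR, hxR⟩ := hmemC x hx
      exact Finset.mem_sup.mpr ⟨R, hR, hxR⟩
  refine ⟨Pb, Pc, Pb.card, Pc.card, hPbpart, hPcpart, ?_, ?_, ?_, ?_, ?_⟩
  · rw [← hcard]
    exact Finset.card_filter_add_card_filter_not (p := (· ⊆ B))
  · obtain ⟨b, hb⟩ := hB
    obtain ⟨R, hR, _⟩ := hmemB b hb
    exact Finset.card_pos.mpr ⟨R, hR⟩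
  · obtain ⟨x, hx⟩ := hC
    obtain ⟨R, hR, _⟩ := hmemC x hx
    exact Finset.card_pos.mpr ⟨R, hR⟩
  · exact Finset.filter_union_filter_not_eq _ _
  · exact Finset.disjoint_filter_filter_not _ _ _

end Aux

/-- Recursion of the MULTIPARTITION algorithm: if `A` is the disjoint union of nonempty sets
`B, C ∈ ℱ` and every member of `ℱ` other than `A` is contained in `B` or in `C`, and
`m X k` denotes, for `X ∈ {A, B, C}` and admissible `k ≥ 1`, the minimum of the product cost
over partitions of `X` into `k` blocks from `ℱ`, then for `k ≥ 2` admissible for `A` the value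
`m A k` is the minimum of `m B i * m C j` over admissible decompositions `i + j = k`, and
`k ≥ 2` is admissible for `A` iff such a decomposition exists. -/
theorem multipartition_recursion {α : Type*} [DecidableEq α] (A B C : Finset α)
    (hB : B.Nonempty) (hC : C.Nonempty) (hBC : Disjoint B C) (hA : A = B ∪ C)
    (ℱ : Set (Finset α)) (hFne : ∀ R ∈ ℱ, R.Nonempty)
    (hBF : B ∈ ℱ) (hCF : C ∈ ℱ)
    (hFsub : ∀ R ∈ ℱ, R ≠ A → R ⊆ B ∨ R ⊆ C)
    (c : Finset α → ℝ) (hc : ∀ R ∈ ℱ, 0 < c R)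
    (m : Finset α → ℕ → ℝ)
    (hm : ∀ X ∈ ({A, B, C} : Set (Finset α)), ∀ k, 1 ≤ k → Adm ℱ X k →
      IsLeast {r | ∃ P : Finset (Finset α), IsFPartition ℱ P X k ∧ ∏ R ∈ P, c R = r} (m X k)) :
    (∀ k, 2 ≤ k → Adm ℱ A k →
      IsLeast {r | ∃ i j, i + j = k ∧ 1 ≤ i ∧ 1 ≤ j ∧ Adm ℱ B i ∧ Adm ℱ C j ∧
        r = m B i * m C j} (m A k)) ∧
    (∀ k, 2 ≤ k →
      (Adm ℱ A k ↔ ∃ i j, i + j = k ∧ 1 ≤ i ∧ 1 ≤ j ∧ Adm ℱ B i ∧ Adm ℱ C j)) := by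
  have hAmem : A ∈ ({A, B, C} : Set (Finset α)) := Or.inl rfl
  have hBmem : B ∈ ({A, B, C} : Set (Finset α)) := Or.inr (Or.inl rfl)
  have hCmem : C ∈ ({A, B, C} : Set (Finset α)) := Or.inr (Or.inr rfl)
  -- joining admissible partitions gives an admissible partition of A with cost m B i * m C j
  have hjoin : ∀ i j, 1 ≤ i → 1 ≤ j → Adm ℱ B i → Adm ℱ C j →
      Adm ℱ A (i + j) ∧ (Adm ℱ A (i + j) → m A (i + j) ≤ m B i * m C j) := by
    intro i j hi hj hAi hAj
    obtain ⟨Q, hQ, hQprod⟩ := (hm B hBmem i hi hAi).1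
    obtain ⟨R, hR, hRprod⟩ := (hm C hCmem j hj hAj).1
    obtain ⟨hdisj, hpart⟩ := join_partition hBC hQ hR
    rw [← hA] at hpart
    refine ⟨⟨Q ∪ R, hpart⟩, fun hAdm => ?_⟩
    have := (hm A hAmem (i + j) (by omega) hAdm).2
    apply this
    refine ⟨Q ∪ R, hpart, ?_⟩
    rw [Finset.prod_union hdisj, hQprod, hRprod]
  have key : ∀ k, 2 ≤ k → Adm ℱ A k →
      IsLeast {r | ∃ i j, i + j = k ∧ 1 ≤ i ∧ 1 ≤ j ∧ Adm ℱ B i ∧ Adm ℱ C j ∧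
        r = m B i * m C j} (m A k) := by
    intro k hk hAk
    have hmA := hm A hAmem k (by omega) hAk
    constructor
    · -- membership
      obtain ⟨P, hP, hPprod⟩ := hmA.1
      obtain ⟨Pb, Pc, i, j, hPb, hPc, hij, hi, hj, hun, hdisjPP⟩ :=
        split_partition hB hC hBC hA hFsub hk hP
      have hAdmB : Adm ℱ B i := ⟨Pb, hPb⟩
      have hAdmC : Adm ℱ C j := ⟨Pc, hPc⟩
      have hmB := hm B hBmem i hi hAdmB
      have hmC := hm C hCmem j hj hAdmC
      refine ⟨i, j, hij, hi, hj, hAdmB, hAdmC, ?_⟩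
      have hle1 : m B i ≤ ∏ S ∈ Pb, c S := hmB.2 ⟨Pb, hPb, rfl⟩
      have hle2 : m C j ≤ ∏ S ∈ Pc, c S := hmC.2 ⟨Pc, hPc, rfl⟩
      have hposB : 0 < m B i := by
        obtain ⟨Q, hQ, hQprod⟩ := hmB.1
        rw [← hQprod]
        exact Finset.prod_pos fun S hS => hc S (hQ.2.1 S hS)
      have hposC : 0 < m C j := by
        obtain ⟨Q, hQ, hQprod⟩ := hmC.1
        rw [← hQprod]
        exact Finset.prod_pos fun S hS => hc S (hQ.2.1 S hS)
      have hnonnegPb : 0 ≤ ∏ S ∈ Pb, c S :=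
        Finset.prod_nonneg fun S hS => (hc S (hPb.2.1 S hS)).le
      have hge : m B i * m C j ≤ m A k := by
        calc m B i * m C j ≤ (∏ S ∈ Pb, c S) * ∏ S ∈ Pc, c S :=
              mul_le_mul hle1 hle2 hposC.le hnonnegPb
          _ = ∏ S ∈ P, c S := by rw [← Finset.prod_union hdisjPP, hun]
          _ = m A k := hPprod
      have hle : m A k ≤ m B i * m C j := by
        have := (hjoin i j hi hj hAdmB hAdmC).2
        rw [hij] at this
        exact this hAk
      linarith
    · -- lower bound
      rintro r ⟨i, j, hij, hi, hj, hAdmB, hAdmC, rfl⟩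
      have := (hjoin i j hi hj hAdmB hAdmC).2
      rw [hij] at this
      exact this hAk
  refine ⟨key, fun k hk => ⟨fun hAk => ?_, fun ⟨i, j, hij, hi, hj, hAi, hAj⟩ => ?_⟩⟩
  · obtain ⟨P, hP⟩ := hAk
    obtain ⟨Pb, Pc, i, j, hPb, hPc, hij, hi, hj, _, _⟩ :=
      split_partition hB hC hBC hA hFsub hk hP
    exact ⟨i, j, hij, hi, hj, ⟨Pb, hPb⟩, ⟨Pc, hPc⟩⟩
  · have := (hjoin i j hi hj hAi hAj).1
    rwa [hij] at this
end
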